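/- Suppose ρ = p/q with gcd(p,q) = 1 and N ∣ q. Then L²(μ_{ρ,N}) admits an infinite orthonormal set of exponentials e^{-2πiλx}. -/

import Mathlib

open MeasureTheory Complex Real
open scoped ENNReal

/-- The Fourier transform `μ̂(ξ) = ∫ e^{-2πiξx} dμ(x)`. -/
noncomputable def FT (μ : Measure ℝ) (ξ : ℝ) : ℂ :=
  ∫ x, Complex.exp (-2 * Real.pi * Complex.I * ξ * x) ∂μ

/-- `μ` is the self-similar measure `μ(·) = (1/N) ∑_{j<N} μ(ρ⁻¹(·) − j)`. -/
def IsSelfSimilar (ρ : ℝ) (N : ℕ) (μ : Measure ℝ) : Prop :=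
  μ = (N : ℝ≥0∞)⁻¹ • ∑ j ∈ Finset.range N, μ.map (fun x => ρ * x + (j : ℝ))

/-- Orthonormality of the exponentials `e_λ, λ ∈ Λ`, in `L²(μ)`. -/
def ExpOrthonormal (μ : Measure ℝ) (Λ : Set ℝ) : Prop :=
  ∀ l ∈ Λ, ∀ l' ∈ Λ, FT μ (l - l') = if l = l' then 1 else 0

/-!
Self-similarity gives `μ̂(ξ) = M_N(ξ) μ̂(ρξ)`, so `μ̂` vanishes wherever some `M_N(ρ^m ξ)` does,
in particular at `ρ^{-m} a / N` whenever `N ∤ a`. Take `Λ = {q^n / N : n ∈ ℕ}`: for `m < n`,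
`ρ^m (q^n - q^m) / N = p^m (q^{n-m} - 1) / N`, and `N ∤ p^m (q^{n-m} - 1)` because `N` is coprime
to `p` and divides `q`. The case `m > n` follows from `μ̂(-ξ) = conj μ̂(ξ)`.
-/

/-- The mask `M_N(ξ) = (1/N) ∑_{j<N} e^{-2πiξj}` of the digit set `{0, …, N-1}`. -/
noncomputable def mask (N : ℕ) (ξ : ℝ) : ℂ :=
  (N : ℂ)⁻¹ * ∑ j ∈ Finset.range N, Complex.exp (-2 * π * I * ξ * j)

theorem mask_div_eq_zero {N : ℕ} (hN : 1 < N) {a : ℤ} (ha : ¬ (N : ℤ) ∣ a) :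
    mask N (a / N) = 0 := by
  set ζ := Complex.exp (2 * π * I / N)
  have hζ : IsPrimitiveRoot ζ N := Complex.isPrimitiveRoot_exp N (by omega)
  have hexp : ∀ j : ℕ, Complex.exp (-2 * π * I * ((a / N : ℝ) : ℂ) * j) = (ζ ^ (-a)) ^ j := by
    intro j
    rw [← Complex.exp_int_mul, ← Complex.exp_nat_mul]
    push_cast
    ring_nf
  have hc1 : ζ ^ (-a) ≠ 1 := by
    rwa [Ne, hζ.zpow_eq_one_iff_dvd, Int.dvd_neg]
  have hcN : (ζ ^ (-a)) ^ N = 1 := by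
    rw [← zpow_natCast, ← zpow_mul, mul_comm, zpow_mul, zpow_natCast, hζ.pow_eq_one, one_zpow]
  simp only [mask, hexp, geom_sum_eq hc1, hcN, sub_self, zero_div, mul_zero]

theorem integrable_exp_mul_I (μ : Measure ℝ) [IsFiniteMeasure μ] (ξ : ℝ) :
    Integrable (fun x : ℝ => Complex.exp (-2 * π * I * ξ * x)) μ := by
  refine Integrable.of_bound (by fun_prop) 1 (Filter.Eventually.of_forall fun x => ?_)
  rw [Complex.norm_exp]
  simp

theorem FT_zero (μ : Measure ℝ) [IsProbabilityMeasure μ] : FT μ 0 = 1 := by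
  simp [FT]

theorem FT_neg (μ : Measure ℝ) (ξ : ℝ) : FT μ (-ξ) = starRingEnd ℂ (FT μ ξ) := by
  rw [FT, FT, ← integral_conj]
  congr 1 with x
  rw [← Complex.exp_conj]
  simp only [map_mul, map_neg, conj_I, conj_ofReal, map_ofNat, ofReal_neg]
  ring_nf

theorem FT_map_affine (μ : Measure ℝ) (ρ b ξ : ℝ) :
    ∫ x, Complex.exp (-2 * π * I * ξ * x) ∂(μ.map fun x => ρ * x + b) =
      Complex.exp (-2 * π * I * ξ * b) * FT μ (ρ * ξ) := by
  rw [integral_map (by fun_prop) (by fun_prop), FT, ← integral_const_mul]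
  congr 1 with x
  rw [← Complex.exp_add]
  push_cast
  ring_nf

theorem IsSelfSimilar.FT_eq {ρ : ℝ} {N : ℕ} {μ : Measure ℝ} [IsFiniteMeasure μ]
    (hμ : IsSelfSimilar ρ N μ) (ξ : ℝ) : FT μ ξ = mask N ξ * FT μ (ρ * ξ) := by
  conv_lhs => rw [FT, hμ]
  rw [integral_smul_measure, integral_finsetSum_measure fun j _ => integrable_exp_mul_I _ ξ]
  simp only [FT_map_affine, ← Finset.sum_mul, mask, ENNReal.toReal_inv, ENNReal.toReal_natCast,
    Complex.real_smul]
  push_cast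
  ring

theorem IsSelfSimilar.FT_eq_zero {ρ : ℝ} {N : ℕ} {μ : Measure ℝ} [IsFiniteMeasure μ]
    (hμ : IsSelfSimilar ρ N μ) {m : ℕ} {ξ : ℝ} (h : mask N (ρ ^ m * ξ) = 0) : FT μ ξ = 0 := by
  induction m generalizing ξ with
  | zero => rw [hμ.FT_eq, ← one_mul ξ, ← pow_zero ρ, h, zero_mul]
  | succ m ih => rw [hμ.FT_eq, ih (ξ := ρ * ξ) (by rwa [← mul_assoc, ← pow_succ]), mul_zero]

theorem expOrthonormal_range {μ : Measure ℝ} [IsProbabilityMeasure μ] {f : ℕ → ℝ}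
    (hf : Function.Injective f) (h : ∀ m n, m < n → FT μ (f n - f m) = 0) :
    ExpOrthonormal μ (Set.range f) := by
  rintro _ ⟨n, rfl⟩ _ ⟨m, rfl⟩
  rcases lt_trichotomy m n with hmn | rfl | hnm
  · rw [if_neg (hf.ne hmn.ne'), h m n hmn]
  · rw [sub_self, if_pos rfl, FT_zero]
  · rw [if_neg (hf.ne hnm.ne), ← neg_sub, FT_neg, h n m hnm, map_zero]

theorem not_dvd_pow_mul_pow_sub_one {N p q : ℕ} (hN : 1 < N) (hNq : N ∣ q)
    (hcop : Nat.Coprime p q) (m : ℕ) {s : ℕ} (hs : s ≠ 0) :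
    ¬ (N : ℤ) ∣ p ^ m * (q ^ s - 1) := by
  have hNp : IsCoprime (N : ℤ) (p ^ m) :=
    (Nat.isCoprime_iff_coprime.mpr (hcop.coprime_dvd_right hNq).symm).pow_right
  obtain ⟨k, hk⟩ : (N : ℤ) ∣ q ^ s := (Int.natCast_dvd_natCast.mpr hNq).trans (dvd_pow_self _ hs)
  have hNqs : IsCoprime (N : ℤ) (q ^ s - 1) := ⟨k, -1, by rw [hk]; ring⟩
  intro hdvd
  have := Int.isUnit_iff_natAbs_eq.mp ((hNp.mul_right hNqs).isUnit_of_dvd hdvd)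
  simp only [Int.natAbs_natCast] at this
  omega

theorem div_pow_mul_pow_add_div_sub_pow_div {p q N : ℝ} (hq : q ≠ 0) (m s : ℕ) :
    (p / q) ^ m * (q ^ (m + s) / N - q ^ m / N) = p ^ m * (q ^ s - 1) / N := by
  rw [pow_add, div_pow]
  field_simp

theorem stmt_17_general (p q : ℕ) (hpq : p < q) (hcop : Nat.Coprime p q)
    (N : ℕ) (hN : 1 < N) (hNq : N ∣ q) (ρ : ℝ) (hρ : ρ = (p : ℝ) / q)
    (μ : Measure ℝ) [IsProbabilityMeasure μ] (hμ : IsSelfSimilar ρ N μ) :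
    ∃ Λ : Set ℝ, Λ.Infinite ∧ ExpOrthonormal μ Λ := by
  have hq : (1 : ℝ) < q := by exact_mod_cast hN.trans_le (Nat.le_of_dvd (by omega) hNq)
  have hinj : Function.Injective fun n : ℕ => (q : ℝ) ^ n / N :=
    ((pow_right_strictMono₀ hq).div_const (by positivity)).injective
  refine ⟨_, Set.infinite_range_of_injective hinj, expOrthonormal_range hinj fun m n hmn => ?_⟩
  obtain ⟨s, rfl⟩ := Nat.exists_eq_add_of_lt hmn
  refine hμ.FT_eq_zero (m := m) ?_
  rw [hρ, add_assoc, div_pow_mul_pow_add_div_sub_pow_div (by positivity)]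
  exact_mod_cast mask_div_eq_zero hN (not_dvd_pow_mul_pow_sub_one hN hNq hcop m s.succ_ne_zero)

theorem stmt_17 (p q : ℕ) (hp : 0 < p) (hpq : p < q) (hcop : Nat.Coprime p q)
    (N : ℕ) (hN : 1 < N) (hNq : N ∣ q) (ρ : ℝ) (hρ : ρ = (p : ℝ) / q)
    (μ : Measure ℝ) [IsProbabilityMeasure μ] (hμ : IsSelfSimilar ρ N μ) :
    ∃ Λ : Set ℝ, Λ.Infinite ∧ ExpOrthonormal μ Λ :=
  stmt_17_general p q hpq hcop N hN hNq ρ hρ μ hμ
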